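/- Let (M, 𝒜) be an uncertainty matroid on a finite ground set E. A set X ⊆ E is a witness set if and only if there exist an uncertain element e ∈ X and a circuit C of the matroid M'_e such that e ∈ C and C ∩ (mid(e) ∪ (X ∩ both(e))) ≠ ∅. -/

import Mathlib

open Matroid

variable {α : Type*}

/-- `A` is an uncertainty area function for `M`: each element of the ground set gets a
nonempty bounded set of reals. -/
def IsAreaFun (M : Matroid α) (A : α → Set ℝ) : Prop :=
  ∀ e ∈ M.E, (A e).Nonempty ∧ BddBelow (A e) ∧ BddAbove (A e)

/-- A realization: a weight function with `w e ∈ A e` for every element of the ground set. -/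
def Realization (M : Matroid α) (A : α → Set ℝ) (w : α → ℝ) : Prop :=
  ∀ e ∈ M.E, w e ∈ A e

/-- The total `w`-weight of a set. -/
noncomputable def setWeight (w : α → ℝ) (T : Set α) : ℝ := ∑ᶠ e ∈ T, w e

/-- A `w`-basis: a basis of `M` of minimum total `w`-weight. -/
def IsMinBasis (M : Matroid α) (w : α → ℝ) (T : Set α) : Prop :=
  M.IsBase T ∧ ∀ B, M.IsBase B → setWeight w T ≤ setWeight w B

/-- A uniformly optimal basis (an `A`-basis): a `w`-basis for every realization `w`. -/
def IsUOB (M : Matroid α) (A : α → Set ℝ) (T : Set α) : Prop :=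
  ∀ w, Realization M A w → IsMinBasis M w T

/-- An element is certain if its area is a singleton. -/
def Certain (A : α → Set ℝ) (e : α) : Prop := ∃ r : ℝ, A e = {r}

/-- `e` is blue if every realization admits a minimum weight basis containing `e`. -/
def Blue (M : Matroid α) (A : α → Set ℝ) (e : α) : Prop :=
  ∀ w, Realization M A w → ∃ T, IsMinBasis M w T ∧ e ∈ T

/-- `e` is red if every realization admits a minimum weight basis avoiding `e`. -/
def Red (M : Matroid α) (A : α → Set ℝ) (e : α) : Prop :=
  ∀ w, Realization M A w → ∃ T, IsMinBasis M w T ∧ e ∉ T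

/-- `e` is colored if it is blue or red. -/
def Colored (M : Matroid α) (A : α → Set ℝ) (e : α) : Prop :=
  Blue M A e ∨ Red M A e

/-- `B` is a revelation of `X` in `(M, A)`: on `X` each area is replaced by a singleton
subset of itself, and outside `X` areas are unchanged. -/
def IsRevelation (M : Matroid α) (A : α → Set ℝ) (X : Set α) (B : α → Set ℝ) : Prop :=
  (∀ e ∈ X, ∃ r ∈ A e, B e = {r}) ∧ ∀ e ∉ X, B e = A e

/-- `F ⊆ E` is a feasible query if every revelation of `F` admits a uniformly optimal basis. -/
def FeasibleQuery (M : Matroid α) (A : α → Set ℝ) (F : Set α) : Prop :=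
  F ⊆ M.E ∧ ∀ B, IsRevelation M A F B → ∃ T, IsUOB M B T

/-- A witness set: a set intersecting every feasible query. -/
def WitnessSet (M : Matroid α) (A : α → Set ℝ) (X : Set α) : Prop :=
  ∀ F, FeasibleQuery M A F → (X ∩ F).Nonempty

/-- Deletion of a set of elements from a matroid. -/
def Matroid.del (M : Matroid α) (D : Set α) : Matroid α := M ↾ (M.E \ D)

/-- Contraction of a set of elements in a matroid, defined by duality. -/
def Matroid.con (M : Matroid α) (C : Set α) : Matroid α := (M✶.del C)✶

/-- A circuit: a minimal dependent set. -/
def Matroid.IsCircuit' (M : Matroid α) (C : Set α) : Prop :=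
  M.Dep C ∧ ∀ D, D ⊂ C → M.Indep D

/-- `low e`: elements of `E - e` whose area lies entirely at or below `L_e`. -/
def lowSet (M : Matroid α) (A : α → Set ℝ) (e : α) : Set α :=
  {f ∈ M.E | f ≠ e ∧ sSup (A f) ≤ sInf (A e)}

/-- `high e`: elements of `E - e` whose area lies entirely at or above `U_e`. -/
def highSet (M : Matroid α) (A : α → Set ℝ) (e : α) : Set α :=
  {f ∈ M.E | f ≠ e ∧ sSup (A e) ≤ sInf (A f)}

/-- `mid e`: elements of `E - e` whose area meets the open interval `(L_e, U_e)`. -/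
def midSet (M : Matroid α) (A : α → Set ℝ) (e : α) : Set α :=
  {f ∈ M.E | f ≠ e ∧ (A f ∩ Set.Ioo (sInf (A e)) (sSup (A e))).Nonempty}

/-- `both e`: elements of `(E - e) \ mid e` whose area meets both `(-∞, L_e]` and `[U_e, ∞)`. -/
def bothSet (M : Matroid α) (A : α → Set ℝ) (e : α) : Set α :=
  {f ∈ M.E | f ≠ e ∧ f ∉ midSet M A e ∧
    (A f ∩ Set.Iic (sInf (A e))).Nonempty ∧ (A f ∩ Set.Ici (sSup (A e))).Nonempty}

/-- The matroid `M'_e = M / low(e) \ high(e)`. -/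
def minorAt (M : Matroid α) (A : α → Set ℝ) (e : α) : Matroid α :=
  (M.con (lowSet M A e)).del (highSet M A e)


/-!
Call `e` ambiguous if `e ∉ cl(low e)` but `e ∈ cl(E - high e - e)`. If some `e` is ambiguous,
no uniformly optimal basis exists: a basis containing `e` can swap `e` for an element outside
`high e`, and a basis avoiding `e` can swap in `e` for an element of its fundamental circuit
outside `low e`; in both cases some realization makes the swap strictly cheaper. Conversely, if
no uncertain element is ambiguous, a basis that is lexicographically minimal for `(L, U)` under
single exchanges satisfies `U_x ≤ L_y` for every exchange pair, hence is optimal for every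
realization.

So `F` is a feasible query iff no revelation of `F` makes an uncertain element ambiguous; such an
element lies outside `F`. Given a circuit `C ∋ e` of `M'_e` and `g ∈ C ∩ (mid e ∪ (X ∩ both e))`,
a set `F` avoiding `X` can be revealed below `U_e` on `C` and above `L_e` elsewhere where
possible; then only `C - {e, g}` joins `low e` and `C - e` stays out of `high e`, so `e` becomes
ambiguous. Conversely, an ambiguous `e` in a revelation of `E - X` yields a circuit of `M / low e`
through `e` that meets `mid e ∪ (X ∩ both e)` and avoids `high e`.
-/

open Set

namespace Matroid

variable {M : Matroid α} {B C P Q T : Set α} {e g x : α}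

lemma isCircuit'_iff : M.IsCircuit' C ↔ M.IsCircuit C :=
  isCircuit_iff_forall_ssubset.symm

lemma IsBase.mem_fundCircuit_iff (hB : M.IsBase B) (he : e ∈ M.E) (heB : e ∉ B) (hxe : x ≠ e) :
    x ∈ M.fundCircuit e B ↔ M.IsBase (insert e (B \ {x})) := by
  rw [hB.indep.mem_fundCircuit_iff (by rwa [hB.closure_eq]) heB,
    ← insert_sdiff_singleton_comm hxe.symm]
  exact ⟨hB.exchange_isBase_of_indep heB, IsBase.indep⟩

lemma IsBase.exists_exchange_symm (hT : M.IsBase T) (hB : M.IsBase B) (hxT : x ∈ T)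
    (hxB : x ∉ B) :
    ∃ y ∈ B \ T, M.IsBase (insert y (T \ {x})) ∧ M.IsBase (insert x (B \ {y})) := by
  have hxE := hT.subset_ground hxT
  have hC := hB.fundCircuit_isCircuit hxE hxB
  obtain ⟨y, ⟨hyC, hyx⟩, hycl⟩ : ∃ y ∈ M.fundCircuit x B \ {x}, y ∉ M.closure (T \ {x}) :=
    not_subset.1 fun h => hT.indep.notMem_closure_sdiff_of_mem hxT <|
      M.closure_subset_closure_of_subset_closure h
        (hC.mem_closure_sdiff_singleton_of_mem (M.mem_fundCircuit x B))
  have hyB : y ∈ B := (M.fundCircuit_subset_insert x B hyC).resolve_left hyx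
  have hyT : y ∉ T := fun hyT => hycl (M.mem_closure_of_mem' ⟨hyT, hyx⟩ (hB.subset_ground hyB))
  exact ⟨y, ⟨hyB, hyT⟩, hT.exchange_base_of_notMem_closure hxT hycl (hB.subset_ground hyB),
    (hB.mem_fundCircuit_iff hxE hxB hyx).1 hyC⟩

lemma exists_isCircuit_inter_nonempty (heP : e ∉ P) (he : e ∈ M.closure (P ∪ Q))
    (heQ : e ∉ M.closure Q) : ∃ C ⊆ insert e (P ∪ Q), M.IsCircuit C ∧ e ∈ C ∧ (C ∩ P).Nonempty := by
  have heQ' : e ∉ Q := fun h => heQ (M.mem_closure_of_mem' h (M.mem_ground_of_mem_closure he))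
  obtain ⟨C, hCPQ, hC, heC⟩ := exists_isCircuit_of_mem_closure he (by simp [heP, heQ'])
  refine ⟨C, hCPQ, hC, heC, not_disjoint_iff_nonempty_inter.1 fun hCP => heQ ?_⟩
  refine M.closure_subset_closure ?_ (hC.mem_closure_sdiff_singleton_of_mem heC)
  rintro f ⟨hfC, hfe⟩
  obtain (rfl | hfP | hfQ) := hCPQ hfC
  · exact absurd rfl hfe
  · exact absurd hfP (hCP.notMem_of_mem_left hfC)
  · exact hfQ

lemma IsCircuit.mem_closure_sdiff_union {L : Set α} (hC : (M ／ L).IsCircuit C) (he : e ∈ C) :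
    e ∈ M.closure (C \ {e} ∪ L) := by
  have := hC.mem_closure_sdiff_singleton_of_mem he
  rw [contract_closure_eq] at this
  exact this.1

lemma IsCircuit.notMem_closure_sdiff_union {L : Set α} (hC : (M ／ L).IsCircuit C) (he : e ∈ C)
    (hg : g ∈ C) (hge : g ≠ e) : e ∉ M.closure (C \ {e, g} ∪ L) := by
  have := (hC.sdiff_singleton_indep hg).notMem_closure_sdiff_of_mem ⟨he, hge.symm⟩
  rw [contract_closure_eq, Set.sdiff_sdiff, singleton_union, pair_comm] at this
  exact fun h => this ⟨h, (hC.subset_ground he).2⟩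

end Matroid

section Weights

variable {M : Matroid α} {w : α → ℝ} {T : Set α} {x y : α}

lemma setWeight_exchange (hT : T.Finite) (hx : x ∈ T) (hy : y ∉ T) :
    setWeight w (insert y (T \ {x})) + w x = setWeight w T + w y := by
  have hT' := finsum_mem_insert w (fun h => h.2 rfl) (hT.sdiff (t := {x}))
  rw [insert_sdiff_self_of_mem hx] at hT'
  rw [setWeight, setWeight, finsum_mem_insert w (fun h => hy h.1) hT.sdiff, hT']
  ring

lemma IsMinBasis.le_of_exchange [M.Finite] (hT : IsMinBasis M w T) (hx : x ∈ T) (hy : y ∉ T)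
    (hB : M.IsBase (insert y (T \ {x}))) : w x ≤ w y := by
  have := setWeight_exchange (w := w) (M.ground_finite.subset hT.1.subset_ground) hx hy
  linarith [hT.2 _ hB]

lemma isMinBasis_of_forall_exchange [M.Finite] (hT : M.IsBase T)
    (h : ∀ x ∈ T, ∀ y ∉ T, M.IsBase (insert y (T \ {x})) → w x ≤ w y) : IsMinBasis M w T := by
  refine ⟨hT, fun B hB => ?_⟩
  induction hn : (T \ B).ncard using Nat.strong_induction_on generalizing B with
  | _ n ih =>
    by_cases hTB : T ⊆ B
    · rw [hT.eq_of_subset_isBase hB hTB]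
    obtain ⟨x, hxT, hxB⟩ := not_subset.1 hTB
    obtain ⟨y, ⟨hyB, hyT⟩, hTy, hBx⟩ := hT.exists_exchange_symm hB hxT hxB
    have hlt : (T \ insert x (B \ {y})).ncard < n := by
      refine hn ▸ ncard_lt_ncard ((ssubset_iff_of_subset ?_).2
        ⟨x, ⟨hxT, hxB⟩, fun h => h.2 (.inl rfl)⟩)
        (M.ground_finite.subset (sdiff_subset.trans hT.subset_ground))
      exact fun z ⟨hzT, hz⟩ => ⟨hzT, fun hzB => hz (.inr ⟨hzB, fun h => hyT (h ▸ hzT)⟩)⟩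
    have := setWeight_exchange (w := w) (M.ground_finite.subset hB.subset_ground) hyB hxB
    linarith [ih _ hlt _ hBx rfl, h x hxT y hyT hTy]

/-- No single exchange decreases `T` in the lexicographic order of `(w₁, w₂)`. -/
def IsLocalLexMinBase (M : Matroid α) (w₁ w₂ : α → ℝ) (T : Set α) : Prop :=
  M.IsBase T ∧ ∀ x ∈ T, ∀ y ∉ T, M.IsBase (insert y (T \ {x})) →
    w₁ x ≤ w₁ y ∧ (w₁ y ≤ w₁ x → w₂ x ≤ w₂ y)

lemma exists_isLocalLexMinBase [M.Finite] (w₁ w₂ : α → ℝ) :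
    ∃ T, IsLocalLexMinBase M w₁ w₂ T := by
  have hfin : {B | M.IsBase B}.Finite :=
    M.ground_finite.finite_subsets.subset fun B hB => hB.subset_ground
  obtain ⟨T₁, hT₁, hmin₁⟩ := exists_min_image _ (setWeight w₁) hfin M.exists_isBase
  obtain ⟨T, ⟨hT, hT₁T⟩, hmin₂⟩ :=
    exists_min_image {B | M.IsBase B ∧ setWeight w₁ B = setWeight w₁ T₁}
      (setWeight w₂) (hfin.subset fun B hB => hB.1) ⟨T₁, hT₁, rfl⟩
  refine ⟨T, hT, fun x hx y hy hB => ?_⟩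
  have hTfin := M.ground_finite.subset hT.subset_ground
  have h₁ := setWeight_exchange (w := w₁) hTfin hx hy
  have h₂ := setWeight_exchange (w := w₂) hTfin hx hy
  have hle₁ := hmin₁ _ hB
  refine ⟨by linarith, fun hyx => ?_⟩
  linarith [hmin₂ _ ⟨hB, le_antisymm (by linarith) hle₁⟩]

end Weights

section Areas

variable {M : Matroid α} {A B : α → Set ℝ} {F : Set α} {e f : α} {v : ℝ}

lemma sInf_lt_sSup_of_not_certain (hA : IsAreaFun M A) (he : e ∈ M.E) (hunc : ¬ Certain A e) :
    sInf (A e) < sSup (A e) := by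
  obtain ⟨hne, hbdd, hbdd'⟩ := hA e he
  refine lt_of_not_ge fun hle => hunc ⟨sInf (A e), hne.subset_singleton_iff.1 fun a ha => ?_⟩
  exact le_antisymm ((le_csSup hbdd' ha).trans hle) (csInf_le hbdd ha)

lemma notMem_highSet_of_mem (hA : IsAreaFun M A) (hv : v ∈ A f) (hlt : v < sSup (A e)) :
    f ∉ highSet M A e :=
  fun hf => hlt.not_ge (hf.2.2.trans (csInf_le (hA f hf.1).2.1 hv))

lemma exists_mem_lt_of_notMem_highSet (hA : IsAreaFun M A) (hf : f ∈ M.E) (hfe : f ≠ e)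
    (hfH : f ∉ highSet M A e) : ∃ v ∈ A f, v < sSup (A e) :=
  exists_lt_of_csInf_lt (hA f hf).1 (not_le.1 fun h => hfH ⟨hf, hfe, h⟩)

lemma exists_mem_gt_of_notMem_lowSet (hA : IsAreaFun M A) (hf : f ∈ M.E) (hfe : f ≠ e)
    (hfL : f ∉ lowSet M A e) : ∃ v ∈ A f, sInf (A e) < v :=
  exists_lt_of_lt_csSup (hA f hf).1 (not_le.1 fun h => hfL ⟨hf, hfe, h⟩)

lemma disjoint_lowSet_highSet (hA : IsAreaFun M A) (hlt : sInf (A e) < sSup (A e)) :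
    Disjoint (lowSet M A e) (highSet M A e) := by
  refine disjoint_left.2 fun f hfL hfH => ?_
  obtain ⟨hne, hbdd, hbdd'⟩ := hA f hfL.1
  linarith [csInf_le_csSup hne hbdd hbdd', hfL.2.2, hfH.2.2]

lemma mem_bothSet (hA : IsAreaFun M A) (hf : f ∈ M.E) (hfe : f ≠ e) (hfL : f ∉ lowSet M A e)
    (hfH : f ∉ highSet M A e) (hfM : f ∉ midSet M A e) : f ∈ bothSet M A e := by
  obtain ⟨a, ha, haU⟩ := exists_mem_lt_of_notMem_highSet hA hf hfe hfH
  obtain ⟨b, hb, hbL⟩ := exists_mem_gt_of_notMem_lowSet hA hf hfe hfL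
  exact ⟨hf, hfe, hfM, ⟨a, ha, not_lt.1 fun h => hfM ⟨hf, hfe, a, ha, h, haU⟩⟩,
    ⟨b, hb, not_lt.1 fun h => hfM ⟨hf, hfe, b, hb, hbL, h⟩⟩⟩

lemma IsRevelation.certain (hB : IsRevelation M A F B) (he : e ∈ F) : Certain B e :=
  let ⟨r, _, hr⟩ := hB.1 e he
  ⟨r, hr⟩

lemma IsRevelation.isAreaFun (hA : IsAreaFun M A) (hB : IsRevelation M A F B) :
    IsAreaFun M B := by
  intro f hf
  by_cases hfF : f ∈ F
  · obtain ⟨r, -, hr⟩ := hB.1 f hfF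
    rw [hr]
    exact ⟨singleton_nonempty r, bddBelow_singleton, bddAbove_singleton⟩
  · rw [hB.2 f hfF]
    exact hA f hf

lemma IsRevelation.lowSet_subset (hA : IsAreaFun M A) (hB : IsRevelation M A F B) (he : e ∉ F) :
    lowSet M A e ⊆ lowSet M B e := by
  refine fun f ⟨hf, hfe, hle⟩ => ⟨hf, hfe, ?_⟩
  rw [hB.2 e he]
  by_cases hfF : f ∈ F
  · obtain ⟨r, hr, hBf⟩ := hB.1 f hfF
    rw [hBf, csSup_singleton]
    exact (le_csSup (hA f hf).2.2 hr).trans hle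
  · rwa [hB.2 f hfF]

lemma IsRevelation.highSet_subset (hA : IsAreaFun M A) (hB : IsRevelation M A F B) (he : e ∉ F) :
    highSet M A e ⊆ highSet M B e := by
  refine fun f ⟨hf, hfe, hle⟩ => ⟨hf, hfe, ?_⟩
  rw [hB.2 e he]
  by_cases hfF : f ∈ F
  · obtain ⟨r, hr, hBf⟩ := hB.1 f hfF
    rw [hBf, csInf_singleton]
    exact hle.trans (csInf_le (hA f hf).2.1 hr)
  · rwa [hB.2 f hfF]

end Areas

section Realizations

variable {M : Matroid α} {A : α → Set ℝ} {T : Set α} {w : α → ℝ} {x y : α} {a b : ℝ}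

lemma exists_realization (hA : IsAreaFun M A) : ∃ w, Realization M A w := by
  choose! w hw using fun f hf => (hA f hf).1
  exact ⟨w, hw⟩

lemma Realization.update [DecidableEq α] (hw : Realization M A w) (ha : a ∈ A x) :
    Realization M A (Function.update w x a) := by
  intro f hf
  obtain rfl | hfx := eq_or_ne f x
  · simpa
  · simpa [hfx] using hw f hf

lemma IsUOB.isBase (hA : IsAreaFun M A) (hT : IsUOB M A T) : M.IsBase T :=
  let ⟨w, hw⟩ := exists_realization hA
  (hT w hw).1

lemma IsUOB.le_of_exchange [M.Finite] (hA : IsAreaFun M A) (hT : IsUOB M A T) (hx : x ∈ T)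
    (hy : y ∉ T) (hB : M.IsBase (insert y (T \ {x}))) (ha : a ∈ A x) (hb : b ∈ A y) : a ≤ b := by
  classical
  obtain ⟨w, hw⟩ := exists_realization hA
  have hxy : x ≠ y := fun h => hy (h ▸ hx)
  simpa [hxy] using (hT _ ((hw.update ha).update hb)).le_of_exchange hx hy hB

end Realizations

/-- Read in `minorAt M A e`: `e` is neither a loop nor a coloop there. -/
def Ambiguous (M : Matroid α) (A : α → Set ℝ) (e : α) : Prop :=
  e ∉ M.closure (lowSet M A e) ∧ e ∈ M.closure ((M.E \ highSet M A e) \ {e})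

section UniformlyOptimalBases

variable {M : Matroid α} {A : α → Set ℝ} {T : Set α} {e x y : α}

theorem not_exists_isUOB_of_ambiguous [M.Finite] (hA : IsAreaFun M A) (he : Ambiguous M A e) :
    ¬ ∃ T, IsUOB M A T := by
  rintro ⟨T, hT⟩
  have hTb := hT.isBase hA
  have heE := M.mem_ground_of_mem_closure he.2
  by_cases heT : e ∈ T
  · obtain ⟨f, ⟨⟨hfE, hfH⟩, hfe⟩, hfcl⟩ :
        ∃ f ∈ (M.E \ highSet M A e) \ {e}, f ∉ M.closure (T \ {e}) :=
      not_subset.1 fun h => hTb.indep.notMem_closure_sdiff_of_mem heT <|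
        M.closure_subset_closure_of_subset_closure h he.2
    have hfT : f ∉ T := fun hfT => hfcl (M.mem_closure_of_mem' ⟨hfT, hfe⟩ hfE)
    obtain ⟨b, hb, hbU⟩ := exists_mem_lt_of_notMem_highSet hA hfE hfe hfH
    obtain ⟨a, ha, hba⟩ := exists_lt_of_lt_csSup (hA e heE).1 hbU
    exact hba.not_ge <| hT.le_of_exchange hA heT hfT
      (hTb.exchange_base_of_notMem_closure heT hfcl hfE) ha hb
  · have hC := hTb.fundCircuit_isCircuit heE heT
    obtain ⟨h, ⟨hhC, hhe⟩, hhL⟩ : ∃ z ∈ M.fundCircuit e T \ {e}, z ∉ lowSet M A e :=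
      not_subset.1 fun hsub => he.1 <| M.closure_subset_closure hsub
        (hC.mem_closure_sdiff_singleton_of_mem (M.mem_fundCircuit e T))
    have hhT : h ∈ T := (M.fundCircuit_subset_insert e T hhC).resolve_left hhe
    obtain ⟨a, ha, hLa⟩ := exists_mem_gt_of_notMem_lowSet hA (hTb.subset_ground hhT) hhe hhL
    obtain ⟨b, hb, hba⟩ := exists_lt_of_csInf_lt (hA e heE).1 hLa
    exact hba.not_ge <| hT.le_of_exchange hA hhT heT
      ((hTb.mem_fundCircuit_iff heE heT hhe).1 hhC) ha hb

/-- Otherwise some `g ∈ low x` could replace `x`; since `L_g ≤ U_g ≤ L_x` the lower bounds tie,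
and the tie-break gives `U_x ≤ U_g ≤ L_x`. -/
lemma IsLocalLexMinBase.notMem_closure_lowSet (hA : IsAreaFun M A)
    (hT : IsLocalLexMinBase M (fun f => sInf (A f)) (fun f => sSup (A f)) T) (hx : x ∈ T)
    (hunc : sInf (A x) < sSup (A x)) : x ∉ M.closure (lowSet M A x) := by
  intro hcl
  obtain ⟨g, hgL, hgcl⟩ : ∃ g ∈ lowSet M A x, g ∉ M.closure (T \ {x}) :=
    not_subset.1 fun h => hT.1.indep.notMem_closure_sdiff_of_mem hx <|
      M.closure_subset_closure_of_subset_closure h hcl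
  have hgT : g ∉ T := fun hgT => hgcl (M.mem_closure_of_mem' ⟨hgT, hgL.2.1⟩ hgL.1)
  obtain ⟨hLxg, htie⟩ := hT.2 x hx g hgT (hT.1.exchange_base_of_notMem_closure hx hgcl hgL.1)
  obtain ⟨hne, hbdd, hbdd'⟩ := hA g hgL.1
  have hLU := csInf_le_csSup hne hbdd hbdd'
  have hgx := hgL.2.2
  linarith [htie (by linarith)]

lemma IsLocalLexMinBase.sSup_le_sInf
    (hT : IsLocalLexMinBase M (fun f => sInf (A f)) (fun f => sSup (A f)) T) (hx : x ∈ T)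
    (hy : y ∉ T) (hB : M.IsBase (insert y (T \ {x})))
    (hxR : x ∉ M.closure ((M.E \ highSet M A x) \ {x})) :
    sSup (A x) ≤ sInf (A y) := by
  have hyE : y ∈ M.E := hB.subset_ground (mem_insert y _)
  have hxy : x ≠ y := fun h => hy (h ▸ hx)
  have hC := hT.1.fundCircuit_isCircuit hyE hy
  have hxC := (hT.1.mem_fundCircuit_iff hyE hy hxy).2 hB
  obtain ⟨h, ⟨hhC, hhx⟩, hhR⟩ : ∃ z ∈ M.fundCircuit y T \ {x}, z ∉ (M.E \ highSet M A x) \ {x} :=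
    not_subset.1 fun hsub => hxR <| M.closure_subset_closure hsub
      (hC.mem_closure_sdiff_singleton_of_mem hxC)
  have hhH : h ∈ highSet M A x := by
    by_contra hhH
    exact hhR ⟨⟨hC.subset_ground hhC, hhH⟩, hhx⟩
  obtain rfl | hhy := eq_or_ne h y
  · exact hhH.2.2
  · have hhT := (M.fundCircuit_subset_insert y T hhC).resolve_left hhy
    exact hhH.2.2.trans (hT.2 h hhT y hy ((hT.1.mem_fundCircuit_iff hyE hy hhy).1 hhC)).1

theorem exists_isUOB [M.Finite] (hA : IsAreaFun M A)
    (h : ∀ e ∈ M.E, ¬ Certain A e → ¬ Ambiguous M A e) : ∃ T, IsUOB M A T := by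
  obtain ⟨T, hT⟩ := exists_isLocalLexMinBase (M := M) (fun f => sInf (A f)) (fun f => sSup (A f))
  refine ⟨T, fun w hw => isMinBasis_of_forall_exchange hT.1 fun x hx y hy hB => ?_⟩
  have hxE := hT.1.subset_ground hx
  have hyE : y ∈ M.E := hB.subset_ground (mem_insert y _)
  have hUL : sSup (A x) ≤ sInf (A y) := by
    by_cases hcert : Certain A x
    · obtain ⟨r, hr⟩ := hcert
      simpa [hr] using (hT.2 x hx y hy hB).1
    · have hunc := sInf_lt_sSup_of_not_certain hA hxE hcert
      exact hT.sSup_le_sInf hx hy hB fun hxR =>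
        h x hxE hcert ⟨hT.notMem_closure_lowSet hA hx hunc, hxR⟩
  calc w x ≤ sSup (A x) := le_csSup (hA x hxE).2.2 (hw x hxE)
    _ ≤ sInf (A y) := hUL
    _ ≤ w y := csInf_le (hA y hyE).2.1 (hw y hyE)

end UniformlyOptimalBases

section WitnessSets

variable {M : Matroid α} {A B : α → Set ℝ} {C F X : Set α} {e f g : α}

lemma minorAt_eq : minorAt M A e = M ／ lowSet M A e ＼ highSet M A e := rfl

lemma IsRevelation.sdiff_highSet_subset (hA : IsAreaFun M A)
    (hB : IsRevelation M A (M.E \ X) B) (heX : e ∈ X) :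
    (M.E \ highSet M B e) \ {e} ⊆ midSet M A e ∪ (X ∩ bothSet M A e) ∪ lowSet M B e := by
  have heF : e ∉ M.E \ X := fun h => h.2 heX
  rintro f ⟨⟨hf, hfH⟩, hfe⟩
  by_cases hfM : f ∈ midSet M A e
  · exact .inl (.inl hfM)
  by_cases hfX : f ∈ X
  · by_cases hfL : f ∈ lowSet M A e
    · exact .inr (hB.lowSet_subset hA heF hfL)
    refine .inl (.inr ⟨hfX, mem_bothSet hA hf hfe hfL (fun h => hfH ?_) hfM⟩)
    exact hB.highSet_subset hA heF h
  · obtain ⟨r, hr, hBf⟩ := hB.1 f ⟨hf, hfX⟩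
    have hBe : B e = A e := hB.2 e heF
    have hrU : r < sSup (A e) :=
      not_le.1 fun hle => hfH ⟨hf, hfe, by rwa [hBf, hBe, csInf_singleton]⟩
    refine .inr ⟨hf, hfe, ?_⟩
    rw [hBf, hBe, csSup_singleton]
    exact not_lt.1 fun hlt => hfM ⟨hf, hfe, r, hr, hlt, hrU⟩

lemma exists_isCircuit_of_ambiguous (hA : IsAreaFun M A) (hB : IsRevelation M A (M.E \ X) B)
    (he : e ∈ M.E) (hunc : ¬ Certain B e) (hamb : Ambiguous M B e) :
    e ∈ X ∧ ¬ Certain A e ∧ ∃ C, (minorAt M A e).IsCircuit' C ∧ e ∈ C ∧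
      (C ∩ (midSet M A e ∪ (X ∩ bothSet M A e))).Nonempty := by
  have heF : e ∉ M.E \ X := fun h => hunc (hB.certain h)
  have heX : e ∈ X := by_contra fun h => heF ⟨he, h⟩
  have hBe : B e = A e := hB.2 e heF
  have hAunc : ¬ Certain A e := by rwa [Certain, ← hBe]
  have hlt := sInf_lt_sSup_of_not_certain hA he hAunc
  have hLB := hB.lowSet_subset hA heF
  obtain ⟨C, hCsub, hC, heC, hCP⟩ := exists_isCircuit_inter_nonempty (M := M ／ lowSet M A e)
    (P := midSet M A e ∪ (X ∩ bothSet M A e)) (Q := lowSet M B e)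
    (by rintro (h | ⟨-, h⟩) <;> exact h.2.1 rfl)
    (by
      rw [contract_closure_eq]
      exact ⟨M.closure_subset_closure ((hB.sdiff_highSet_subset hA heX).trans subset_union_left)
        hamb.2, fun h => h.2.1 rfl⟩)
    (by
      rw [contract_closure_eq, union_eq_left.2 hLB]
      exact fun h => hamb.1 h.1)
  refine ⟨heX, hAunc, C, ?_, heC, hCP⟩
  rw [isCircuit'_iff, minorAt_eq, delete_isCircuit_iff]
  refine ⟨hC, disjoint_left.2 fun f hfC hfH => ?_⟩
  obtain rfl | (⟨-, -, v, hv, hvI⟩ | ⟨-, -, -, -, ⟨v, hv, hvL⟩, -⟩) | hfL := hCsub hfC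
  · exact hfH.2.1 rfl
  · exact notMem_highSet_of_mem hA hv hvI.2 hfH
  · exact notMem_highSet_of_mem hA hv (lt_of_le_of_lt hvL hlt) hfH
  · exact disjoint_left.1 (disjoint_lowSet_highSet (hB.isAreaFun hA) (by rwa [hBe])) hfL
      (hB.highSet_subset hA heF hfH)

lemma exists_revealed_value (hA : IsAreaFun M A) (hf : f ∈ M.E) (hfe : f ≠ e)
    (hfC : f ∈ C → f ∉ highSet M A e) :
    ∃ r ∈ A f, (f ∈ C → r < sSup (A e)) ∧ (f ∉ C → f ∉ lowSet M A e → sInf (A e) < r) ∧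
      (f ∈ midSet M A e → sInf (A e) < r) := by
  by_cases hfM : f ∈ midSet M A e
  · obtain ⟨-, -, r, hr, hLr, hrU⟩ := hfM
    exact ⟨r, hr, fun _ => hrU, fun _ _ => hLr, fun _ => hLr⟩
  by_cases hfC' : f ∈ C
  · obtain ⟨r, hr, hrU⟩ := exists_mem_lt_of_notMem_highSet hA hf hfe (hfC hfC')
    exact ⟨r, hr, fun _ => hrU, fun h => absurd hfC' h, fun h => absurd h hfM⟩
  by_cases hfL : f ∈ lowSet M A e
  · obtain ⟨r, hr⟩ := (hA f hf).1
    exact ⟨r, hr, fun h => absurd h hfC', fun _ h => absurd hfL h, fun h => absurd h hfM⟩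
  · obtain ⟨r, hr, hLr⟩ := exists_mem_gt_of_notMem_lowSet hA hf hfe hfL
    exact ⟨r, hr, fun h => absurd h hfC', fun _ _ => hLr, fun h => absurd h hfM⟩

lemma exists_revelation_ambiguous (hA : IsAreaFun M A) (hF : F ⊆ M.E) (hXF : Disjoint X F)
    (heX : e ∈ X) (hunc : ¬ Certain A e) (hC : (minorAt M A e).IsCircuit' C) (heC : e ∈ C)
    (hgC : g ∈ C) (hg : g ∈ midSet M A e ∪ (X ∩ bothSet M A e)) :
    ∃ B, IsRevelation M A F B ∧ Ambiguous M B e := by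
  classical
  rw [isCircuit'_iff, minorAt_eq] at hC
  have hCE : C ⊆ (M.E \ lowSet M A e) \ highSet M A e := hC.subset_ground
  have heF : e ∉ F := hXF.notMem_of_mem_left heX
  have hge : g ≠ e := by rintro rfl; rcases hg with h | ⟨-, h⟩ <;> exact h.2.1 rfl
  choose! r hrA hr using fun f (hf : f ∈ F) => exists_revealed_value hA (hF hf)
    (fun h : f = e => heF (h ▸ hf)) fun hfC => (hCE hfC).2
  let B : α → Set ℝ := fun f => if f ∈ F then {r f} else A f
  have hB : IsRevelation M A F B :=
    ⟨fun f hf => ⟨r f, hrA f hf, if_pos hf⟩, fun f hf => if_neg hf⟩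
  have hBA := hB.isAreaFun hA
  have hBe : B e = A e := hB.2 e heF
  have hlow : lowSet M B e ⊆ C \ {e, g} ∪ lowSet M A e := by
    rintro f ⟨hf, hfe, hfL⟩
    rw [hBe] at hfL
    by_cases hfF : f ∈ F
    · rw [show B f = {r f} from if_pos hfF, csSup_singleton] at hfL
      obtain ⟨-, hrL, hrM⟩ := hr f hfF
      by_cases hfL' : f ∈ lowSet M A e
      · exact .inr hfL'
      by_cases hfC : f ∈ C
      · refine .inl ⟨hfC, ?_⟩
        rintro (rfl | rfl)
        · exact hfe rfl
        rcases hg with hgM | ⟨hgX, -⟩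
        · exact (hrM hgM).not_ge hfL
        · exact hXF.notMem_of_mem_left hgX hfF
      · exact absurd hfL (hrL hfC hfL').not_ge
    · rw [show B f = A f from if_neg hfF] at hfL
      exact .inr ⟨hf, hfe, hfL⟩
  have hspan : C \ {e} ∪ lowSet M A e ⊆ (M.E \ highSet M B e) \ {e} := by
    rintro f (⟨hfC, hfe⟩ | hfL)
    · refine ⟨⟨(hCE hfC).1.1, fun hfH => ?_⟩, hfe⟩
      by_cases hfF : f ∈ F
      · refine notMem_highSet_of_mem hBA (show r f ∈ B f by simp [B, hfF]) ?_ hfH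
        rw [hBe]
        exact (hr f hfF).1 hfC
      · refine (hCE hfC).2 ⟨hfH.1, hfH.2.1, ?_⟩
        simpa [B, hfF, hBe] using hfH.2.2
    · exact ⟨⟨hfL.1, disjoint_left.1 (disjoint_lowSet_highSet hBA (by
        rw [hBe]; exact sInf_lt_sSup_of_not_certain hA (hCE heC).1.1 hunc))
        (hB.lowSet_subset hA heF hfL)⟩, hfL.2.1⟩
  exact ⟨B, hB, fun h => hC.of_delete.notMem_closure_sdiff_union heC hgC hge
    (M.closure_subset_closure hlow h), M.closure_subset_closure hspan
    (hC.of_delete.mem_closure_sdiff_union heC)⟩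

end WitnessSets

theorem witness_set_iff_general (M : Matroid α) (A : α → Set ℝ)
    (hE : M.E.Finite) (hA : IsAreaFun M A) (X : Set α) :
    WitnessSet M A X ↔
      ∃ e ∈ X, ¬ Certain A e ∧ ∃ C, (minorAt M A e).IsCircuit' C ∧ e ∈ C ∧
        (C ∩ (midSet M A e ∪ (X ∩ bothSet M A e))).Nonempty := by
  have : M.Finite := ⟨hE⟩
  constructor
  · intro hW
    by_contra hno
    have hfeas : FeasibleQuery M A (M.E \ X) := ⟨sdiff_subset, fun B hB =>
      exists_isUOB (hB.isAreaFun hA) fun e he hunc hamb =>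
        hno ⟨e, exists_isCircuit_of_ambiguous hA hB he hunc hamb⟩⟩
    obtain ⟨f, hfX, hfF⟩ := hW _ hfeas
    exact hfF.2 hfX
  · rintro ⟨e, heX, hunc, C, hC, heC, g, hgC, hg⟩ F ⟨hF, hfeas⟩
    by_contra hXF
    obtain ⟨B, hB, hamb⟩ := exists_revelation_ambiguous hA hF
      (disjoint_iff_inter_eq_empty.2 (not_nonempty_iff_eq_empty.1 hXF)) heX hunc hC heC hgC hg
    exact not_exists_isUOB_of_ambiguous (hB.isAreaFun hA) hamb (hfeas B hB)

/-- Characterization of witness sets via circuits of `M'_e`. -/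
theorem witness_set_iff (M : Matroid α) (A : α → Set ℝ)
    (hE : M.E.Finite) (hA : IsAreaFun M A) (X : Set α) (hX : X ⊆ M.E) :
    WitnessSet M A X ↔
      ∃ e ∈ X, ¬ Certain A e ∧ ∃ C, (minorAt M A e).IsCircuit' C ∧ e ∈ C ∧
        (C ∩ (midSet M A e ∪ (X ∩ bothSet M A e))).Nonempty :=
  witness_set_iff_general M A hE hA X
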